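/- arXiv:1304.3359 — 3 statements merged into one kernel-verified Lean document; each statement's English description precedes it below -/
import Mathlib

section
/- Let B₁ ⊂ ℝ³ be the double cone {(x,y) ∈ ℝ × ℝ²: |x| + |y| ≤ 1}, so that ψ_{B₁}(x) = 1/(x+1). Then ψ_{IB₁}(0) = ∫₀^∞ (t+1)^{−2} dt = 1, and ψ_{IB₁}(δ) = ∫₀^{1/δ} (t+1)^{−2}(1 − δ²t²)^{−1/2} dt for δ > 0; moreover lim_{δ→0⁺} (1 − ψ_{IB₁}(δ))/δ = 0 and (1 − ψ_{IB₁}(δ))/δ² → ∞ as δ → 0⁺. -/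
open Real Set MeasureTheory Filter Topology

/-- `ψ_{IB₁}(δ)` for the double cone `B₁ ⊂ ℝ³`, whose profile function is
`ψ_{B₁}(t) = 1/(t+1)` (here `n = 3`, so the exponent in the intersection body formula
is `(n−4)/2 = −1/2`). -/
noncomputable def psiIB1 (δ : ℝ) : ℝ :=
  ∫ t in Set.Ioo 0 (1 / δ), ((t + 1) ^ 2)⁻¹ * (Real.sqrt (1 - δ ^ 2 * t ^ 2))⁻¹

lemma psi_eq {d : ℝ} (h0 : 0 < d) (h1 : d < 1) :
    psiIB1 d = ((1:ℝ) - d^2)⁻¹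
      - d^2 / (Real.sqrt (1-d^2))^3 * (Real.log (1 + Real.sqrt (1-d^2)) - Real.log d) := by
  set c := Real.sqrt (1 - d^2) with hcdef
  have hd2 : (0:ℝ) < 1 - d^2 := by nlinarith
  have hc : 0 < c := Real.sqrt_pos.mpr hd2
  have hc2 : c^2 = 1 - d^2 := Real.sq_sqrt hd2.le
  set b := 1/d with hbdef
  have hb : 0 < b := by positivity
  set g : ℝ → ℝ := fun t => ((t + 1) ^ 2)⁻¹ * (Real.sqrt (1 - d ^ 2 * t ^ 2))⁻¹ with hgdef
  set F : ℝ → ℝ := fun t => -(c^2)⁻¹ * (Real.sqrt (1 - d^2*t^2)/(t+1))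
      + d^2/c^3 * (Real.log (1 + d^2*t + c*Real.sqrt (1 - d^2*t^2)) - Real.log (d*(t+1))) with hFdef
  have hInt : IntervalIntegrable g volume 0 b := by
    have hmaj : IntervalIntegrable (fun t : ℝ => (1 - d*t) ^ (-(1/2) : ℝ)) volume 0 b := by
      have i1 : IntervalIntegrable (fun x : ℝ => x ^ (-(1/2) : ℝ)) volume (1 - d*0) (1 - d*b) :=
        intervalIntegral.intervalIntegrable_rpow' (by norm_num)
      have i2 := (i1.comp_sub_left 1).comp_mul_left (c := d)
      have hdb : d * b / d = b := by field_simp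
      simpa [hdb] using i2
    rw [intervalIntegrable_iff_integrableOn_Ioc_of_le hb.le] at hmaj
    rw [hgdef, intervalIntegrable_iff_integrableOn_Ioc_of_le hb.le]
    apply hmaj.mono' (((((continuous_id.add continuous_const).pow 2).measurable).inv.mul
      ((Real.continuous_sqrt.comp (continuous_const.sub
        (continuous_const.mul (continuous_pow 2)))).measurable.inv)).aestronglyMeasurable)
    filter_upwards [ae_restrict_mem measurableSet_Ioc] with t ht
    obtain ⟨ht0, htb⟩ := ht
    simp only [Pi.mul_apply, Pi.inv_apply, Pi.pow_apply, Pi.add_apply, Pi.sub_apply, Function.comp_apply, id_eq]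
    have hdt : d * t ≤ 1 := by
      rw [hbdef] at htb
      calc d * t ≤ d * (1/d) := by exact (mul_le_mul_iff_right₀ h0).mpr htb
      _ = 1 := by field_simp
    have hg0 : (0:ℝ) ≤ ((t + 1) ^ 2)⁻¹ * (Real.sqrt (1 - d ^ 2 * t ^ 2))⁻¹ := by positivity
    rw [Real.norm_of_nonneg hg0]
    have hrw : (1 - d*t) ^ (-(1/2) : ℝ) = (Real.sqrt (1 - d*t))⁻¹ := by
      rw [Real.sqrt_eq_rpow, ← Real.rpow_neg (by linarith)]
    rw [hrw]
    have hle1 : ((t + 1) ^ 2)⁻¹ ≤ 1 := by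
      rw [inv_le_one_iff₀]
      right; nlinarith
    have hle2 : (Real.sqrt (1 - d ^ 2 * t ^ 2))⁻¹ ≤ (Real.sqrt (1 - d*t))⁻¹ := by
      rcases eq_or_lt_of_le hdt with h | h
      · have : 1 - d^2*t^2 = 0 := by nlinarith
        rw [this]
        simp
      · apply inv_anti₀ (Real.sqrt_pos.mpr (by linarith))
        apply Real.sqrt_le_sqrt
        nlinarith [mul_nonneg (mul_pos h0 ht0).le (by linarith : (0:ℝ) ≤ 1 - d*t)]
    calc ((t + 1) ^ 2)⁻¹ * (Real.sqrt (1 - d ^ 2 * t ^ 2))⁻¹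
        ≤ 1 * (Real.sqrt (1 - d*t))⁻¹ := by
          apply mul_le_mul hle1 hle2 (by positivity) (by norm_num)
    _ = (Real.sqrt (1 - d*t))⁻¹ := by ring
  have hcont : ContinuousOn F (Icc 0 b) := by
    have hRcont : Continuous fun t : ℝ => Real.sqrt (1 - d^2*t^2) :=
      (continuous_const.sub (continuous_const.mul (continuous_pow 2))).sqrt
    have h1ne : ∀ x ∈ Icc (0:ℝ) b, x + 1 ≠ 0 := fun x hx => by
      have := hx.1; positivity
    rw [hFdef]
    refine ContinuousOn.add (continuousOn_const.mul (hRcont.continuousOn.div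
      ((continuous_id.add continuous_const).continuousOn) h1ne)) (continuousOn_const.mul
      (ContinuousOn.sub (ContinuousOn.log ?_ ?_) (ContinuousOn.log ?_ ?_)))
    · exact ((continuous_const.add (continuous_const.mul continuous_id)).add
        (continuous_const.mul hRcont)).continuousOn
    · intro x hx
      have h1 : (0:ℝ) ≤ d^2 * x := by have := hx.1; positivity
      have h2 : (0:ℝ) ≤ c * Real.sqrt (1 - d^2*x^2) := by positivity
      nlinarith
    · exact (continuous_const.mul (continuous_id.add continuous_const)).continuousOn
    · intro x hx
      have := hx.1
      positivity
  have hderiv : ∀ x ∈ Ioo 0 b, HasDerivWithinAt F (g x) (Ioi x) x := by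
    intro x hx
    obtain ⟨hx0, hxb⟩ := hx
    have hdx : d * x < 1 := by
      rw [hbdef] at hxb
      calc d * x < d * (1/d) := by exact (mul_lt_mul_iff_right₀ h0).mpr hxb
      _ = 1 := by field_simp
    have hdx0 : 0 < d*x := mul_pos h0 hx0
    have hux : (0:ℝ) < 1 - d^2*x^2 := by nlinarith
    set R := Real.sqrt (1 - d^2*x^2) with hRdef
    have hR : 0 < R := Real.sqrt_pos.mpr hux
    have hR2 : R^2 = 1 - d^2*x^2 := Real.sq_sqrt hux.le
    have hx1 : (0:ℝ) < x + 1 := by linarith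
    have hA : (0:ℝ) < 1 + d^2*x + c*R := by positivity
    have hu : HasDerivAt (fun t : ℝ => 1 - d^2*t^2) (-(d^2 * (2*x^1))) x := by
      have := ((hasDerivAt_pow 2 x).const_mul (d^2)).const_sub 1
      exact this.congr_deriv (by norm_num)
    have hRd : HasDerivAt (fun t : ℝ => Real.sqrt (1 - d^2*t^2)) (-(d^2 * (2*x^1)) / (2*R)) x :=
      hu.sqrt (ne_of_gt hux)
    have h1x : HasDerivAt (fun t : ℝ => t + 1) 1 x := (hasDerivAt_id x).add_const 1
    have hT1 : HasDerivAt (fun t : ℝ => -(c^2)⁻¹ * (Real.sqrt (1 - d^2*t^2)/(t+1)))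
        (-(c^2)⁻¹ * ((-(d^2 * (2*x^1)) / (2*R) * (x+1) - Real.sqrt (1 - d^2*x^2) * 1)/(x+1)^2)) x :=
      (hRd.div h1x (ne_of_gt hx1)).const_mul _
    have hAd : HasDerivAt (fun t : ℝ => 1 + d^2*t + c*Real.sqrt (1 - d^2*t^2))
        (d^2 * 1 + c * (-(d^2 * (2*x^1)) / (2*R))) x :=
      (((hasDerivAt_id x).const_mul (d^2)).const_add 1).add (hRd.const_mul c)
    have hL1 : HasDerivAt (fun t : ℝ => Real.log (1 + d^2*t + c*Real.sqrt (1 - d^2*t^2)))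
        ((d^2 * 1 + c * (-(d^2 * (2*x^1)) / (2*R))) / (1 + d^2*x + c*R)) x :=
      hAd.log (ne_of_gt hA)
    have hL2 : HasDerivAt (fun t : ℝ => Real.log (d*(t+1))) ((d * 1) / (d * (x+1))) x :=
      (h1x.const_mul d).log (by positivity)
    have hF : HasDerivAt (fun t => -(c^2)⁻¹ * (Real.sqrt (1 - d^2*t^2)/(t+1))
        + d^2/c^3 * (Real.log (1 + d^2*t + c*Real.sqrt (1 - d^2*t^2)) - Real.log (d*(t+1))))
        (-(c^2)⁻¹ * ((-(d^2 * (2*x^1)) / (2*R) * (x+1) - Real.sqrt (1 - d^2*x^2) * 1)/(x+1)^2)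
          + d^2/c^3 * ((d^2 * 1 + c * (-(d^2 * (2*x^1)) / (2*R))) / (1 + d^2*x + c*R)
            - (d * 1) / (d * (x+1)))) x :=
      hT1.add ((hL1.sub hL2).const_mul _)
    have key : (-(c^2)⁻¹ * ((-(d^2 * (2*x^1)) / (2*R) * (x+1) - Real.sqrt (1 - d^2*x^2) * 1)/(x+1)^2)
          + d^2/c^3 * ((d^2 * 1 + c * (-(d^2 * (2*x^1)) / (2*R))) / (1 + d^2*x + c*R)
            - (d * 1) / (d * (x+1))))
        = ((x + 1) ^ 2)⁻¹ * (Real.sqrt (1 - d ^ 2 * x ^ 2))⁻¹ := by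
      rw [← hRdef]
      field_simp
      linear_combination (c*(1 + d^2*x + c*R) - d^2*(x+1)*c) * hR2 + (d^2*(x+1)*R - c*(1 + d^2*x + c*R)) * hc2
    rw [hFdef, hgdef]
    exact (key ▸ hF).hasDerivWithinAt
  have hftc : ∫ t in (0:ℝ)..b, g t = F b - F 0 :=
    intervalIntegral.integral_eq_sub_of_hasDeriv_right_of_le hb.le hcont hderiv hInt
  have h1' : psiIB1 d = ∫ t in (0:ℝ)..b, g t := by
    rw [intervalIntegral.integral_of_le hb.le, psiIB1,
      ← MeasureTheory.integral_Ioc_eq_integral_Ioo]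
  have hdb : d * b = 1 := by rw [hbdef]; field_simp
  have hFb : F b = 0 := by
    have hzero : 1 - d^2 * b^2 = 0 := by linear_combination (-(1+d*b))*hdb
    simp only [hFdef]
    rw [hzero, Real.sqrt_zero]
    rw [show (1:ℝ) + d^2*b + c*0 = d*(b+1) by linear_combination (d-1)*hdb]
    simp
  have hF0 : F 0 = -(c^2)⁻¹ + d^2/c^3 * (Real.log (1 + c) - Real.log d) := by
    simp only [hFdef]
    norm_num
  rw [h1', hftc, hFb, hF0, hc2]
  ring

/-- For the double cone `B₁ ⊂ ℝ³`: `ψ_{IB₁}(0) = ∫₀^∞ (t+1)^{-2} dt = 1`, and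
`(1 − ψ_{IB₁}(δ))/δ → 0` while `(1 − ψ_{IB₁}(δ))/δ² → ∞` as `δ → 0⁺`; in particular
`IB₁` does not have equatorial power type 2. -/
theorem doubleCone_not_power_type_two :
    (∫ t in Set.Ioi (0 : ℝ), ((t + 1) ^ 2)⁻¹) = 1 ∧
    Tendsto (fun δ : ℝ => (1 - psiIB1 δ) / δ) (𝓝[>] (0 : ℝ)) (𝓝 0) ∧
    Tendsto (fun δ : ℝ => (1 - psiIB1 δ) / δ ^ 2) (𝓝[>] (0 : ℝ)) atTop := by
  have hmem : Ioo (0:ℝ) 1 ∈ 𝓝[>] (0:ℝ) := Ioo_mem_nhdsGT_of_mem ⟨le_refl 0, zero_lt_one⟩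
  have hcontc : Continuous fun d : ℝ => Real.sqrt (1-d^2) :=
    (continuous_const.sub (continuous_pow 2)).sqrt
  have hsq : Tendsto (fun d : ℝ => Real.sqrt (1-d^2)) (𝓝 0) (𝓝 1) := by
    have := hcontc.tendsto 0
    norm_num [Real.sqrt_one] at this
    exact this
  have hc3 : Tendsto (fun d : ℝ => (Real.sqrt (1-d^2))^3) (𝓝 0) (𝓝 1) := by
    simpa using hsq.pow 3
  refine ⟨?_, ?_, ?_⟩
  · have h : ∀ x ∈ Ici (0:ℝ), HasDerivAt (fun t : ℝ => -(t+1)⁻¹) (((x+1)^2)⁻¹) x := by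
      intro x hx
      have hne : x + 1 ≠ 0 := by simp at hx; nlinarith
      have := (((hasDerivAt_id x).add_const 1).inv hne).neg
      exact this.congr_deriv (by rw [neg_div, neg_neg, one_div, id_eq])
    have hlim : Tendsto (fun t : ℝ => -(t+1)⁻¹) atTop (𝓝 0) := by
      have : Tendsto (fun t : ℝ => (t+1)⁻¹) atTop (𝓝 0) :=
        tendsto_inv_atTop_zero.comp (tendsto_atTop_add_const_right _ 1 tendsto_id)
      simpa using this.neg
    have := integral_Ioi_of_hasDerivAt_of_nonneg' h (fun x _ => by positivity) hlim
    simp at this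
    convert this using 2
  · have heq : (fun δ : ℝ => (1 - psiIB1 δ) / δ) =ᶠ[𝓝[>] (0:ℝ)]
        (fun d : ℝ => -(d/(1-d^2)) + d/(Real.sqrt (1-d^2))^3 * Real.log (1 + Real.sqrt (1-d^2))
          + (-(d * Real.log d)) * (((Real.sqrt (1-d^2))^3)⁻¹)) := by
      filter_upwards [hmem] with d hd
      have hd2 : (0:ℝ) < 1 - d^2 := by nlinarith [hd.1, hd.2]
      have hc : (0:ℝ) < Real.sqrt (1-d^2) := Real.sqrt_pos.mpr hd2
      have hd0 : d ≠ 0 := ne_of_gt hd.1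
      rw [psi_eq hd.1 hd.2]
      field_simp
      ring
    refine Tendsto.congr' heq.symm ?_
    have A1 : Tendsto (fun d : ℝ => -(d/(1-d^2))) (𝓝[>] (0:ℝ)) (𝓝 0) := by
      have : ContinuousAt (fun d : ℝ => -(d/(1-d^2))) 0 :=
        (continuousAt_id.div ((continuous_const.sub (continuous_pow 2)).continuousAt)
          (by norm_num)).neg
      have := this.tendsto
      norm_num at this
      exact this.mono_left nhdsWithin_le_nhds
    have A2 : Tendsto (fun d : ℝ => d/(Real.sqrt (1-d^2))^3 * Real.log (1 + Real.sqrt (1-d^2)))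
        (𝓝[>] (0:ℝ)) (𝓝 0) := by
      have hlog : Tendsto (fun d : ℝ => Real.log (1 + Real.sqrt (1-d^2))) (𝓝 0)
          (𝓝 (Real.log 2)) := by
        have h2 : Tendsto (fun d : ℝ => 1 + Real.sqrt (1-d^2)) (𝓝 0) (𝓝 2) := by
          have := hsq.const_add (1:ℝ)
          norm_num at this
          exact this
        exact ((Real.continuousAt_log (by norm_num)).tendsto.comp h2)
      have := (tendsto_id.div hc3 one_ne_zero).mul hlog
      norm_num at this
      exact (this.mono_left nhdsWithin_le_nhds).congr fun x => by ring
    have A3 : Tendsto (fun d : ℝ => (-(d * Real.log d)) * (((Real.sqrt (1-d^2))^3)⁻¹))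
        (𝓝[>] (0:ℝ)) (𝓝 0) := by
      have hml : Tendsto (fun d : ℝ => d * Real.log d) (𝓝[>] (0:ℝ)) (𝓝 0) := by
        have := (Real.continuous_mul_log.tendsto 0).mono_left
          (nhdsWithin_le_nhds : 𝓝[>] (0:ℝ) ≤ 𝓝 0)
        simpa using this
      have := hml.neg.mul ((hc3.mono_left nhdsWithin_le_nhds).inv₀ one_ne_zero)
      norm_num at this
      exact this.congr fun x => by ring
    have := (A1.add A2).add A3
    norm_num at this
    exact this.congr fun x => by ring
  · have heq : (fun δ : ℝ => (1 - psiIB1 δ) / δ ^ 2) =ᶠ[𝓝[>] (0:ℝ)]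
        (fun d : ℝ => (-((1-d^2)⁻¹) + Real.log (1 + Real.sqrt (1-d^2))/(Real.sqrt (1-d^2))^3
          + (-Real.log d) * (((Real.sqrt (1-d^2))^3)⁻¹))) := by
      filter_upwards [hmem] with d hd
      have hd2 : (0:ℝ) < 1 - d^2 := by nlinarith [hd.1, hd.2]
      have hc : (0:ℝ) < Real.sqrt (1-d^2) := Real.sqrt_pos.mpr hd2
      have hd0 : d ≠ 0 := ne_of_gt hd.1
      rw [psi_eq hd.1 hd.2]
      field_simp
      ring
    refine Tendsto.congr' heq.symm ?_
    have B1 : Tendsto (fun d : ℝ => -((1-d^2)⁻¹)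
        + Real.log (1 + Real.sqrt (1-d^2))/(Real.sqrt (1-d^2))^3) (𝓝[>] (0:ℝ))
        (𝓝 (-1 + Real.log 2)) := by
      have hlog : Tendsto (fun d : ℝ => Real.log (1 + Real.sqrt (1-d^2))) (𝓝 0)
          (𝓝 (Real.log 2)) := by
        have h2 : Tendsto (fun d : ℝ => 1 + Real.sqrt (1-d^2)) (𝓝 0) (𝓝 2) := by
          have := hsq.const_add (1:ℝ)
          norm_num at this
          exact this
        exact ((Real.continuousAt_log (by norm_num)).tendsto.comp h2)
      have hinv : Tendsto (fun d : ℝ => ((1:ℝ)-d^2)⁻¹) (𝓝 0) (𝓝 1) := by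
        have hbase : Tendsto (fun d : ℝ => (1:ℝ)-d^2) (𝓝 0) (𝓝 1) := by
          have hco : Continuous fun d : ℝ => (1:ℝ)-d^2 := continuous_const.sub (continuous_pow 2)
          have := hco.tendsto 0
          norm_num at this
          exact this
        have := hbase.inv₀ one_ne_zero
        norm_num at this
        exact this
      have := hinv.neg.add (hlog.div hc3 one_ne_zero)
      norm_num at this
      exact (this.mono_left nhdsWithin_le_nhds).congr fun x => by ring
    have B2 : Tendsto (fun d : ℝ => (-Real.log d) * (((Real.sqrt (1-d^2))^3)⁻¹))
        (𝓝[>] (0:ℝ)) atTop := by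
      have hlg : Tendsto (fun d : ℝ => -Real.log d) (𝓝[>] (0:ℝ)) atTop :=
        tendsto_neg_atBot_atTop.comp Real.tendsto_log_nhdsGT_zero
      have hinv : Tendsto (fun d : ℝ => (((Real.sqrt (1-d^2))^3)⁻¹)) (𝓝[>] (0:ℝ)) (𝓝 1) := by
        have := (hc3.mono_left (nhdsWithin_le_nhds : 𝓝[>] (0:ℝ) ≤ 𝓝 0)).inv₀ one_ne_zero
        norm_num at this
        exact this
      exact Filter.Tendsto.atTop_mul_pos zero_lt_one hlg hinv
    exact B1.add_atTop B2
end

section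
/- Let K ⊂ ℝⁿ, n ≥ 7, be a symmetric star body of revolution with ψ_K bounded and ψ_K(t) = O(1/t) as t → ∞. Define ψ_{IK}(x) = ∫₀^{1/x} ψ_K(t)^{n−1}(1 − x²t²)^{(n−4)/2} dt for x > 0 and ψ_{IK}(0) = ∫₀^∞ ψ_K(t)^{n−1} dt. Then ψ_{IK} is twice differentiable at 0 (with ψ_{IK} extended evenly) and ψ_{IK}''(0) = −(n−4)∫₀^∞ ψ_K(t)^{n−1} t² dt. -/
/-!
Write `ψ_{IK}(x) = ∫₀^∞ f(t) g(xt) dt` with `f = ψ^{n-1}` and `g(u) = (1 - u²)₊^α`,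
`α = (n-4)/2`. Since `α > 1`,
`g` is `C¹` with `g'(u) = u q(u)`, `q(u) = -2α (1 - u²)₊^{α-1}` bounded and continuous.
Differentiating under the integral gives `ψ_{IK}'(x) = x ∫ f(t) t² q(xt) dt`, and the factor `x`
turns the second derivative at `0` into the continuity at `0` of the remaining integral, which is
dominated convergence: `ψ_{IK}''(0) = q(0) ∫ f(t) t² dt = -(n-4) ∫ f(t) t² dt`. The decay
`ψ(t) ≤ C/t` makes `f(t) t²` integrable because `n - 1 ≥ 4`.
-/

open Real Set MeasureTheory

/-- `ψ_{IK}`, extended evenly: `ψ_{IK}(0) = ∫₀^∞ ψ(t)^{n−1} dt` and for `x ≠ 0`,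
`ψ_{IK}(x) = ∫₀^{1/|x|} ψ(t)^{n−1}(1 − x²t²)^{(n−4)/2} dt`. -/
noncomputable def psiIK (n : ℕ) (ψ : ℝ → ℝ) (x : ℝ) : ℝ :=
  if x = 0 then ∫ t in Set.Ioi (0 : ℝ), ψ t ^ (n - 1)
  else ∫ t in Set.Ioo (0 : ℝ) (1 / |x|),
        ψ t ^ (n - 1) * (1 - x ^ 2 * t ^ 2) ^ (((n : ℝ) - 4) / 2)

open Filter Topology

lemma integrableOn_Ioi_pow_mul_pow {ψ : ℝ → ℝ} (hψ : Continuous ψ) (hψ0 : ∀ t, 0 ≤ ψ t)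
    {C : ℝ} (hC : ∀ t, 1 ≤ t → ψ t ≤ C / t) {m k : ℕ} (hkm : k + 2 ≤ m) :
    IntegrableOn (fun t => ψ t ^ m * t ^ k) (Ioi 0) := by
  have hcont : Continuous fun t => ψ t ^ m * t ^ k := by fun_prop
  have hexp : (k : ℝ) - m < -1 := by
    have : ((k + 2 : ℕ) : ℝ) ≤ m := by exact_mod_cast hkm
    push_cast at this
    linarith
  rw [← Ioc_union_Ioi_eq_Ioi zero_le_one]
  refine hcont.integrableOn_Ioc.union <|
    ((integrableOn_Ioi_rpow_of_lt hexp one_pos).const_mul (C ^ m)).mono'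
      hcont.aestronglyMeasurable.restrict ?_
  filter_upwards [ae_restrict_mem measurableSet_Ioi] with t (ht : 1 < t)
  have ht0 : 0 < t := by linarith
  rw [Real.norm_of_nonneg (mul_nonneg (pow_nonneg (hψ0 t) _) (pow_nonneg ht0.le _))]
  calc ψ t ^ m * t ^ k ≤ (C / t) ^ m * t ^ k := by gcongr; exacts [hψ0 t, hC t ht.le]
    _ = C ^ m * t ^ ((k : ℝ) - m) := by
      rw [Real.rpow_sub ht0, Real.rpow_natCast, Real.rpow_natCast, div_pow]
      ring

lemma hasDerivAt_sub_mul_of_continuousAt {S : ℝ → ℝ} {a : ℝ} (hS : ContinuousAt S a) :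
    HasDerivAt (fun x => (x - a) * S x) (S a) a := by
  rw [hasDerivAt_iff_tendsto_slope]
  refine (hS.tendsto.mono_left nhdsWithin_le_nhds).congr' ?_
  filter_upwards [self_mem_nhdsWithin] with x (hx : x ≠ a)
  rw [slope_def_field, sub_self, zero_mul, sub_zero, mul_div_cancel_left₀ _ (sub_ne_zero.2 hx)]

lemma hasDerivAt_max_zero_rpow {α : ℝ} (hα : 1 < α) (v : ℝ) :
    HasDerivAt (fun v => max v 0 ^ α) (α * max v 0 ^ (α - 1)) v := by
  have hα0 : α ≠ 0 := by positivity
  have hα1 : α - 1 ≠ 0 := by linarith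
  rcases lt_trichotomy v 0 with hv | rfl | hv
  · rw [max_eq_right hv.le, Real.zero_rpow hα1, mul_zero]
    refine (hasDerivAt_const v (0 : ℝ)).congr_of_eventuallyEq ?_
    filter_upwards [eventually_lt_nhds hv] with w hw
    rw [max_eq_right hw.le, Real.zero_rpow hα0]
  · have hpow : HasDerivWithinAt (fun v : ℝ => v ^ α) 0 (Ici 0) 0 := by
      simpa [Real.zero_rpow hα1] using
        (Real.hasDerivAt_rpow_const (x := 0) (Or.inr hα.le)).hasDerivWithinAt
    have hzero : max (0 : ℝ) 0 ^ α = 0 := by rw [max_self, Real.zero_rpow hα0]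
    rw [max_self, Real.zero_rpow hα1, mul_zero, ← hasDerivWithinAt_univ, ← Iic_union_Ici]
    exact .union
      ((hasDerivWithinAt_const 0 _ (0 : ℝ)).congr
        (fun w (hw : w ≤ 0) => by rw [max_eq_right hw, Real.zero_rpow hα0]) hzero)
      (hpow.congr (fun w (hw : 0 ≤ w) => by rw [max_eq_left hw])
        (by rw [hzero, Real.zero_rpow hα0]))
  · rw [max_eq_left hv.le]
    refine (Real.hasDerivAt_rpow_const (Or.inl hv.ne')).congr_of_eventuallyEq ?_
    filter_upwards [eventually_gt_nhds hv] with w hw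
    rw [max_eq_left hw.le]

/-- The positive part makes `profile α (x * t)` vanish for `t ≥ 1 / |x|`, so that `ψ_{IK}` becomes
an integral over all of `(0, ∞)`. -/
noncomputable def profile (α u : ℝ) : ℝ := max (1 - u ^ 2) 0 ^ α

namespace profile

variable {α : ℝ}

lemma zero_right : profile α 0 = 1 := by simp [profile]

lemma nonneg (u : ℝ) : 0 ≤ profile α u := Real.rpow_nonneg (le_max_right _ _) _

lemma le_one (hα : 0 ≤ α) (u : ℝ) : profile α u ≤ 1 :=
  Real.rpow_le_one (le_max_right _ _) (max_le (by nlinarith [sq_nonneg u]) zero_le_one) hα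

lemma abs_le_one (hα : 0 ≤ α) (u : ℝ) : |profile α u| ≤ 1 := by
  rw [abs_of_nonneg (nonneg u)]
  exact le_one hα u

lemma continuous (hα : 0 ≤ α) : Continuous (profile α) :=
  (by fun_prop : Continuous fun u : ℝ => max (1 - u ^ 2) 0).rpow_const fun _ => Or.inr hα

lemma hasDerivAt (hα : 1 < α) (u : ℝ) :
    HasDerivAt (profile α) (u * (-(2 * α) * profile (α - 1) u)) u := by
  have hsq : HasDerivAt (fun u : ℝ => 1 - u ^ 2) (-(2 * u)) u := by
    simpa using (hasDerivAt_pow 2 u).const_sub 1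
  refine ((hasDerivAt_max_zero_rpow hα (1 - u ^ 2)).comp u hsq).congr_deriv ?_
  rw [profile]
  ring

lemma eq_zero_of_one_le_abs (hα : α ≠ 0) {u : ℝ} (hu : 1 ≤ |u|) : profile α u = 0 := by
  rw [profile, max_eq_right (by nlinarith [sq_abs u]), Real.zero_rpow hα]

lemma eq_of_abs_lt {u : ℝ} (hu : |u| < 1) : profile α u = (1 - u ^ 2) ^ α := by
  rw [profile, max_eq_left (by nlinarith [sq_abs u, abs_nonneg u])]

end profile

section ScaledIntegral

variable {μ : Measure ℝ} {f g q : ℝ → ℝ} {A B : ℝ}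

theorem hasDerivAt_integral_mul_comp_mul (hf : Integrable f μ)
    (hf₂ : Integrable (fun t => f t * t ^ 2) μ) (hgA : ∀ u, |g u| ≤ A)
    (hg : ∀ u, HasDerivAt g (u * q u) u) (hq : Continuous q) (hqB : ∀ u, |q u| ≤ B) (x₀ : ℝ) :
    HasDerivAt (fun x => ∫ t, f t * g (x * t) ∂μ)
      (x₀ * ∫ t, f t * t ^ 2 * q (x₀ * t) ∂μ) x₀ := by
  have hgc : Continuous g := continuous_iff_continuousAt.2 fun u => (hg u).continuousAt
  rw [← integral_const_mul]
  refine (hasDerivAt_integral_of_dominated_loc_of_deriv_le (Metric.ball_mem_nhds x₀ one_pos)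
    (F := fun x t => f t * g (x * t)) (F' := fun x t => x * (f t * t ^ 2 * q (x * t)))
    (bound := fun t => (|x₀| + 1) * B * |f t * t ^ 2|)
    (Eventually.of_forall fun x =>
      hf.aestronglyMeasurable.mul (hgc.comp (continuous_const_mul x)).aestronglyMeasurable)
    (hf.mul_bdd (hgc.comp (continuous_const_mul x₀)).aestronglyMeasurable
      (ae_of_all _ fun t => hgA _))
    (by fun_prop) (ae_of_all _ fun t x hx => ?_) (hf₂.norm.const_mul _)
    (ae_of_all _ fun t x _ => ?_)).2
  · have hx : |x| ≤ |x₀| + 1 := by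
      have := abs_sub_abs_le_abs_sub x x₀
      rw [Metric.mem_ball, Real.dist_eq] at hx
      linarith
    rw [Real.norm_eq_abs, abs_mul, abs_mul (f t * t ^ 2), mul_comm (|f t * t ^ 2|), ← mul_assoc]
    gcongr
    exact hqB _
  · refine (((hg (x * t)).comp x (hasDerivAt_mul_const t)).const_mul (f t)).congr_deriv ?_
    ring

theorem hasDerivAt_deriv_integral_mul_comp_mul_zero (hf : Integrable f μ)
    (hf₂ : Integrable (fun t => f t * t ^ 2) μ) (hgA : ∀ u, |g u| ≤ A)
    (hg : ∀ u, HasDerivAt g (u * q u) u) (hq : Continuous q) (hqB : ∀ u, |q u| ≤ B) :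
    HasDerivAt (deriv fun x => ∫ t, f t * g (x * t) ∂μ) (q 0 * ∫ t, f t * t ^ 2 ∂μ) 0 := by
  have hS : Continuous fun x => ∫ t, f t * t ^ 2 * q (x * t) ∂μ :=
    continuous_of_dominated
      (fun x =>
        hf₂.aestronglyMeasurable.mul (hq.comp (continuous_const_mul x)).aestronglyMeasurable)
      (fun x => ae_of_all _ fun t => ?_) (hf₂.norm.mul_const B) (ae_of_all _ fun t => by fun_prop)
  · rw [funext fun x => (hasDerivAt_integral_mul_comp_mul hf hf₂ hgA hg hq hqB x).deriv]
    simpa [integral_mul_const, mul_comm] using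
      hasDerivAt_sub_mul_of_continuousAt (a := 0) hS.continuousAt
  · rw [Real.norm_eq_abs, Real.norm_eq_abs, abs_mul]
    gcongr
    exact hqB _

end ScaledIntegral

lemma psiIK_eq_integral_profile {n : ℕ} (hn : n ≠ 4) (ψ : ℝ → ℝ) (x : ℝ) :
    psiIK n ψ x = ∫ t in Ioi 0, ψ t ^ (n - 1) * profile (((n : ℝ) - 4) / 2) (x * t) := by
  rcases eq_or_ne x 0 with rfl | hx
  · simp [psiIK, profile.zero_right]
  have hα : ((n : ℝ) - 4) / 2 ≠ 0 := by
    have : (n : ℝ) ≠ 4 := by exact_mod_cast hn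
    contrapose! this
    linarith
  have hx₀ : 0 < |x| := abs_pos.2 hx
  rw [psiIK, if_neg hx, setIntegral_eq_of_subset_of_forall_sdiff_eq_zero
    (measurableSet_Ioi (a := (0 : ℝ))) Ioo_subset_Ioi_self]
  · refine setIntegral_congr_fun measurableSet_Ioo fun t ⟨ht₀, ht⟩ => ?_
    rw [lt_div_iff₀ hx₀, mul_comm] at ht
    rw [profile.eq_of_abs_lt (by rwa [abs_mul, abs_of_pos ht₀]), mul_pow]
  · rintro t ⟨ht₀ : 0 < t, ht⟩
    have ht : 1 / |x| ≤ t := by simpa [ht₀] using ht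
    rw [div_le_iff₀ hx₀, mul_comm] at ht
    rw [profile.eq_zero_of_one_le_abs hα (by rwa [abs_mul, abs_of_pos ht₀]), mul_zero]

theorem psiIK_second_derivative_general (n : ℕ) (hn : 7 ≤ n) (ψ : ℝ → ℝ)
    (hψ_cont : Continuous ψ) (hψ_nonneg : ∀ t, 0 ≤ ψ t)
    (C : ℝ) (hC : ∀ t : ℝ, 1 ≤ t → ψ t ≤ C / t) :
    DifferentiableAt ℝ (deriv (psiIK n ψ)) 0 ∧
      deriv (deriv (psiIK n ψ)) 0
        = -((n : ℝ) - 4) * ∫ t in Set.Ioi (0 : ℝ), ψ t ^ (n - 1) * t ^ 2 := by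
  have hα : 1 < ((n : ℝ) - 4) / 2 := by
    have : (7 : ℝ) ≤ n := by exact_mod_cast hn
    linarith
  set α : ℝ := ((n : ℝ) - 4) / 2
  have hint₀ : IntegrableOn (fun t => ψ t ^ (n - 1)) (Ioi 0) := by
    simpa using integrableOn_Ioi_pow_mul_pow hψ_cont hψ_nonneg hC (k := 0) (by omega)
  have hqB (u : ℝ) : |-(2 * α) * profile (α - 1) u| ≤ 2 * α := by
    rw [abs_mul, abs_neg, abs_of_pos (by linarith)]
    exact mul_le_of_le_one_right (by linarith) (profile.abs_le_one (by linarith) u)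
  have h := hasDerivAt_deriv_integral_mul_comp_mul_zero (μ := volume.restrict (Ioi 0))
    (f := fun t => ψ t ^ (n - 1)) hint₀
    (integrableOn_Ioi_pow_mul_pow hψ_cont hψ_nonneg hC (by omega))
    (profile.abs_le_one (by linarith)) (profile.hasDerivAt hα)
    (continuous_const.mul (profile.continuous (by linarith))) hqB
  rw [funext (psiIK_eq_integral_profile (by omega) ψ)]
  refine ⟨h.differentiableAt, ?_⟩
  rw [h.deriv, profile.zero_right]
  ring

/-- For `n ≥ 7` and `ψ = ψ_K` bounded with `ψ(t) = O(1/t)` at infinity, the function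
`ψ_{IK}` is twice differentiable at `0` and
`ψ_{IK}''(0) = −(n−4) ∫₀^∞ ψ(t)^{n−1} t² dt`. -/
theorem psiIK_second_derivative (n : ℕ) (hn : 7 ≤ n) (ψ : ℝ → ℝ)
    (hψ_cont : Continuous ψ) (hψ_nonneg : ∀ t, 0 ≤ ψ t)
    (M : ℝ) (hM : ∀ t, ψ t ≤ M)
    (C : ℝ) (hC : ∀ t : ℝ, 1 ≤ t → ψ t ≤ C / t) :
    DifferentiableAt ℝ (deriv (psiIK n ψ)) 0 ∧
      deriv (deriv (psiIK n ψ)) 0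
        = -((n : ℝ) - 4) * ∫ t in Set.Ioi (0 : ℝ), ψ t ^ (n - 1) * t ^ 2 :=
  psiIK_second_derivative_general n hn ψ hψ_cont hψ_nonneg C hC
end

section
/- Let K be a symmetric star body of revolution in ℝ⁴ such that ρ_K(φ) = 0 for all φ ∈ [0, α] for some α > 0. Then for all θ ∈ [π/2 − α, π/2], ρ_{IK}(θ) = C/sin θ where C = ∫₀^{π/2} ρ_K(φ)³ sin φ dφ; in particular IK has a cylindrical boundary piece around the equator (it is locally convex but not strictly convex at the equator). -/
open Real Set MeasureTheory

/-- Let `K` be a symmetric star body of revolution in `ℝ⁴` whose radial function `ρ`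
vanishes on `[0, α]` for some `α > 0`. Then for all `θ ∈ [π/2 − α, π/2]`,
`ρ_{IK}(θ) = C / sin θ` with `C = ∫₀^{π/2} ρ(φ)³ sin φ dφ`; i.e. `IK` has a cylindrical
boundary piece around the equator. -/
theorem cylindrical_piece (ρ : ℝ → ℝ) (hρ_cont : Continuous ρ) (hρ_nonneg : ∀ θ, 0 ≤ ρ θ)
    (α : ℝ) (hα : 0 < α) (h0 : ∀ φ : ℝ, 0 ≤ φ → φ ≤ α → ρ φ = 0) :
    ∀ θ ∈ Set.Icc (Real.pi / 2 - α) (Real.pi / 2),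
      (Real.sin θ)⁻¹ * (∫ φ in Set.Ioo (Real.pi / 2 - θ) (Real.pi / 2),
          ρ φ ^ 3 * Real.sin φ)
        = (∫ φ in Set.Ioo 0 (Real.pi / 2), ρ φ ^ 3 * Real.sin φ) / Real.sin θ := by
  intro θ hθ
  set c : ℝ := Real.pi / 2 - θ with hc
  have hc0 : 0 ≤ c := by simp [hc]; linarith [hθ.2]
  have hcα : c ≤ α := by simp [hc]; linarith [hθ.1]
  have hcont : Continuous fun φ => ρ φ ^ 3 * Real.sin φ := by continuity
  have key : (∫ φ in Set.Ioo c (Real.pi / 2), ρ φ ^ 3 * Real.sin φ)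
      = ∫ φ in Set.Ioo 0 (Real.pi / 2), ρ φ ^ 3 * Real.sin φ := by
    rcases le_or_gt c (Real.pi / 2) with hcp | hcp
    · have conv : ∀ a b : ℝ, a ≤ b → (∫ φ in Set.Ioo a b, ρ φ ^ 3 * Real.sin φ)
          = ∫ φ in a..b, ρ φ ^ 3 * Real.sin φ := by
        intro a b hab
        rw [intervalIntegral.integral_of_le hab, ← MeasureTheory.integral_Ioc_eq_integral_Ioo]
      rw [conv _ _ hcp, conv _ _ (by linarith [Real.pi_pos] : (0:ℝ) ≤ Real.pi / 2)]
      have hsplit := intervalIntegral.integral_add_adjacent_intervals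
        (a := 0) (b := c) (c := Real.pi / 2) (μ := MeasureTheory.volume)
        (hcont.intervalIntegrable 0 c) (hcont.intervalIntegrable c (Real.pi / 2))
      have hzero : (∫ φ in (0:ℝ)..c, ρ φ ^ 3 * Real.sin φ) = 0 := by
        have : ∀ φ ∈ Set.uIcc (0:ℝ) c, ρ φ ^ 3 * Real.sin φ = (fun _ => (0:ℝ)) φ := by
          intro φ hφ
          rw [Set.uIcc_of_le hc0] at hφ
          rw [h0 φ hφ.1 (hφ.2.trans hcα)]
          ring
        rw [intervalIntegral.integral_congr this]
        simp
      linarith [hsplit]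
    · have h1 : Set.Ioo c (Real.pi / 2) = (∅ : Set ℝ) := by
        rw [Set.Ioo_eq_empty]; linarith
      have h2 : (∫ φ in Set.Ioo 0 (Real.pi / 2), ρ φ ^ 3 * Real.sin φ) = 0 := by
        have hmeas : MeasurableSet (Set.Ioo (0:ℝ) (Real.pi / 2)) := measurableSet_Ioo
        rw [MeasureTheory.setIntegral_congr_fun hmeas
          (g := fun _ => (0:ℝ)) (fun φ hφ => by
            rw [h0 φ hφ.1.le (hφ.2.le.trans (hcp.le.trans hcα))]; ring)]
        simp
      rw [h1, h2]
      simp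
  rw [key]
  exact inv_mul_eq_div _ _
end
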